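/- For every natural number n ≥ 1, b(n) ≤ (25/44)·(45^{log₁₀(n/5)+1} - 1), where b(n) is the sum of products of decimal digits of the first n odd numbers; equality holds if and only if n = 5·10^k for some k ≥ 0. -/

import Mathlib

/-- Product of the decimal digits of `p`. -/
def digProd (p : ℕ) : ℕ := (Nat.digits 10 p).prod

/-- Sum of products of digits of the first `n` odd positive numbers. -/
def b (n : ℕ) : ℕ := ∑ j ∈ Finset.Icc 1 n, digProd (2 * j - 1)

open Real


lemma digProd_zero : digProd 0 = 1 := by simp [digProd]
lemma digProd_lt10 (d : ℕ) (h1 : 1 ≤ d) (hd : d < 10) : digProd d = d := by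
  interval_cases d <;> simp [digProd]
lemma digProd_step (q d : ℕ) (hq : 1 ≤ q) (hd : d < 10) :
    digProd (10 * q + d) = d * digProd q := by
  unfold digProd
  rw [Nat.digits_def' (by norm_num : 1 < 10) (by omega)]
  have h1 : (10 * q + d) % 10 = d := by omega
  have h2 : (10 * q + d) / 10 = q := by omega
  rw [h1, h2, List.prod_cons]
def A (q : ℕ) : ℕ := ∑ a ∈ Finset.range q, digProd a
lemma A_add (m k : ℕ) : A (m + k) = A m + ∑ a ∈ Finset.range k, digProd (m + a) := by
  induction k with
  | zero => simp [A]
  | succ k ih => rw [← add_assoc, A, Finset.sum_range_succ, ← A, ih, Finset.sum_range_succ]; ring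
lemma A_succ (q : ℕ) : A (q+1) = A q + digProd q := by
  rw [A, Finset.sum_range_succ, ← A]

lemma A_ten (q : ℕ) (hq : 1 ≤ q) : A (10 * q) = 45 * A q + 1 := by
  induction q with
  | zero => omega
  | succ q ih =>
    rcases Nat.eq_or_lt_of_le hq with h | h
    · obtain rfl : q = 0 := by omega
      norm_num [A, Finset.sum_range_succ, digProd_zero, digProd_lt10]
    · have hq1 : 1 ≤ q := by omega
      have : 10 * (q + 1) = 10 * q + 10 := by ring
      rw [this, A_add, ih hq1]
      have hsum : ∑ a ∈ Finset.range 10, digProd (10 * q + a) = 45 * digProd q := by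
        rw [Finset.sum_range_succ, Finset.sum_range_succ, Finset.sum_range_succ,
          Finset.sum_range_succ, Finset.sum_range_succ, Finset.sum_range_succ,
          Finset.sum_range_succ, Finset.sum_range_succ, Finset.sum_range_succ,
          Finset.sum_range_succ]
        simp only [Finset.sum_range_zero]
        rw [digProd_step q 0 hq1 (by norm_num), digProd_step q 1 hq1 (by norm_num),
          digProd_step q 2 hq1 (by norm_num), digProd_step q 3 hq1 (by norm_num),
          digProd_step q 4 hq1 (by norm_num), digProd_step q 5 hq1 (by norm_num),
          digProd_step q 6 hq1 (by norm_num), digProd_step q 7 hq1 (by norm_num),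
          digProd_step q 8 hq1 (by norm_num), digProd_step q 9 hq1 (by norm_num)]
        ring
      rw [hsum, A_succ]; ring

lemma A_tail (q s : ℕ) (hq : 1 ≤ q) (hs : s ≤ 9) :
    A (10 * q + s) = 45 * A q + 1 + (∑ d ∈ Finset.range s, d) * digProd q := by
  rw [A_add, A_ten q hq]
  have : ∑ a ∈ Finset.range s, digProd (10 * q + a) = (∑ d ∈ Finset.range s, d) * digProd q := by
    rw [Finset.sum_mul]
    exact Finset.sum_congr rfl fun d hd => digProd_step q d hq (by
      have := Finset.mem_range.1 hd; omega)
  rw [this]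

lemma A_pow10 (k : ℕ) : 44 * A (10 ^ k) + 1 = 45 ^ (k + 1) := by
  induction k with
  | zero => norm_num [A, Finset.sum_range_succ, digProd_zero]
  | succ k ih =>
    have : (10:ℕ) ^ (k+1) = 10 * 10 ^ k := by ring
    rw [this, A_ten _ (Nat.one_le_pow _ _ (by norm_num))]
    have : 45 ^ (k + 1 + 1) = 45 * 45 ^ (k+1) := by ring
    omega

def bb (n : ℕ) : ℕ := ∑ j ∈ Finset.range n, digProd (2 * j + 1)

lemma b_eq_bb (n : ℕ) : b n = bb n := by
  induction n with
  | zero => simp [b, bb]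
  | succ n ih =>
    rw [b, Finset.sum_Icc_succ_top (by omega : 1 ≤ n + 1), ← b, ih]
    have h : bb (n+1) = bb n + digProd (2 * n + 1) := by rw [bb, Finset.sum_range_succ]; rfl
    have e : 2 * (n + 1) - 1 = 2 * n + 1 := by omega
    rw [h, e]

lemma bb_add (m k : ℕ) : bb (m + k) = bb m + ∑ j ∈ Finset.range k, digProd (2 * (m + j) + 1) := by
  induction k with
  | zero => simp
  | succ k ih => rw [← add_assoc, bb, Finset.sum_range_succ, ← bb, ih, Finset.sum_range_succ]; ring

lemma bb_five (q : ℕ) : bb (5 * q) = 25 * A q := by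
  induction q with
  | zero => simp [bb, A]
  | succ q ih =>
    have h5 : 5 * (q + 1) = 5 * q + 5 := by ring
    rw [h5, bb_add, ih]
    have hA : A (q+1) = A q + digProd q := by rw [A, Finset.sum_range_succ]; rfl
    rcases Nat.eq_zero_or_pos q with rfl | hq
    · norm_num [A, Finset.sum_range_succ, digProd_zero, digProd_lt10]
    · have hsum : ∑ j ∈ Finset.range 5, digProd (2 * (5 * q + j) + 1) = 25 * digProd q := by
        rw [Finset.sum_range_succ, Finset.sum_range_succ, Finset.sum_range_succ,
          Finset.sum_range_succ, Finset.sum_range_succ, Finset.sum_range_zero]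
        have e : ∀ j : ℕ, j < 5 → 2 * (5 * q + j) + 1 = 10 * q + (2 * j + 1) := fun j hj => by ring
        rw [e 0 (by norm_num), e 1 (by norm_num), e 2 (by norm_num), e 3 (by norm_num),
          e 4 (by norm_num), digProd_step q 1 hq (by norm_num), digProd_step q 3 hq (by norm_num),
          digProd_step q 5 hq (by norm_num), digProd_step q 7 hq (by norm_num),
          digProd_step q 9 hq (by norm_num)]
        ring
      rw [hsum, hA]; ring

lemma bb_formula (q s : ℕ) (hq : 1 ≤ q) (hs : s ≤ 4) :
    bb (5 * q + s) = 25 * A q + s ^ 2 * digProd q := by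
  rw [bb_add, bb_five]
  have : ∑ j ∈ Finset.range s, digProd (2 * (5 * q + j) + 1) = s ^ 2 * digProd q := by
    have e : ∀ j ∈ Finset.range s, digProd (2 * (5 * q + j) + 1) = (2 * j + 1) * digProd q := by
      intro j hj
      have hj5 : j < 5 := by have := Finset.mem_range.1 hj; omega
      have : 2 * (5 * q + j) + 1 = 10 * q + (2 * j + 1) := by ring
      rw [this, digProd_step q _ hq (by omega)]
    rw [Finset.sum_congr rfl e, ← Finset.sum_mul]
    congr 1
    interval_cases s <;> simp [Finset.sum_range_succ]
  rw [this]


noncomputable def cc : ℝ := Real.logb 10 45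

lemma ten_rpow_cc : (10:ℝ) ^ cc = 45 := Real.rpow_logb (by norm_num) (by norm_num) (by norm_num)

lemma cc_lb : (33/20 : ℝ) ≤ cc := by
  rw [cc, Real.le_logb_iff_rpow_le (by norm_num) (by norm_num)]
  have h : ((10:ℝ) ^ ((33:ℝ)/20)) ^ (20:ℕ) ≤ (45:ℝ) ^ (20:ℕ) := by
    rw [← Real.rpow_natCast ((10:ℝ) ^ ((33:ℝ)/20)), ← Real.rpow_mul (by norm_num)]
    norm_num
  exact le_of_pow_le_pow_left₀ (by norm_num) (by positivity) h

lemma cc_ub : cc ≤ (83/50 : ℝ) := by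
  rw [cc, Real.logb_le_iff_le_rpow (by norm_num) (by norm_num)]
  have h : (45:ℝ) ^ (50:ℕ) ≤ ((10:ℝ) ^ ((83:ℝ)/50)) ^ (50:ℕ) := by
    rw [← Real.rpow_natCast ((10:ℝ) ^ ((83:ℝ)/50)), ← Real.rpow_mul (by norm_num)]
    norm_num
  exact le_of_pow_le_pow_left₀ (by norm_num) (by positivity) h

lemma cc_pos : (0:ℝ) < cc := lt_of_lt_of_le (by norm_num) cc_lb
lemma one_le_cc : (1:ℝ) ≤ cc := le_trans (by norm_num) cc_lb

lemma rpow_cc_key (x : ℝ) (hx : 0 < x) : (45:ℝ) ^ Real.logb 10 x = x ^ cc := by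
  rw [← ten_rpow_cc, ← Real.rpow_mul (by norm_num), mul_comm,
    Real.rpow_mul (by norm_num), Real.rpow_logb (by norm_num) (by norm_num) hx]

lemma rpow_cc_lb (X M : ℝ) (p r : ℕ) (hr : 0 < r) (hX : 1 ≤ X) (hM : 0 < M)
    (h1 : (10:ℝ)^p ≤ X^r) (h2 : M^r ≤ (45:ℝ)^p) : M ≤ X ^ cc := by
  have hXpos : (0:ℝ) < X := by linarith
  have hrR : (0:ℝ) < (r:ℝ) := by exact_mod_cast hr
  have hlog : (p : ℝ)/r ≤ Real.logb 10 X := by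
    rw [Real.le_logb_iff_rpow_le (by norm_num) hXpos]
    apply le_of_pow_le_pow_left₀ hr.ne' (le_of_lt hXpos)
    calc ((10:ℝ) ^ ((p:ℝ)/r)) ^ r = (10:ℝ) ^ (((p:ℝ)/r) * r) := by
          rw [← Real.rpow_natCast ((10:ℝ) ^ ((p:ℝ)/r)), ← Real.rpow_mul (by norm_num)]
      _ = (10:ℝ) ^ (p:ℝ) := by rw [div_mul_cancel₀ _ hrR.ne']
      _ = (10:ℝ) ^ p := by rw [Real.rpow_natCast]
      _ ≤ X ^ r := h1
  have h45 : (45:ℝ) ^ ((p:ℝ)/r) ≤ (45:ℝ) ^ Real.logb 10 X :=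
    Real.rpow_le_rpow_left_iff (by norm_num : (1:ℝ) < 45) |>.2 hlog
  have hM45 : M ≤ (45:ℝ) ^ ((p:ℝ)/r) := by
    apply le_of_pow_le_pow_left₀ hr.ne' (by positivity)
    calc M ^ r ≤ (45:ℝ)^p := h2
      _ = ((45:ℝ) ^ ((p:ℝ)/r)) ^ r := by
          rw [← Real.rpow_natCast ((45:ℝ) ^ ((p:ℝ)/r)), ← Real.rpow_mul (by norm_num),
            div_mul_cancel₀ _ hrR.ne', Real.rpow_natCast]
  calc M ≤ (45:ℝ) ^ ((p:ℝ)/r) := hM45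
    _ ≤ (45:ℝ) ^ Real.logb 10 X := h45
    _ = X ^ cc := rpow_cc_key X hXpos

lemma rpow_cc_ub (X M : ℝ) (p r : ℕ) (hr : 0 < r) (hX : 1 ≤ X) (hM : 0 < M)
    (h1 : X^r ≤ (10:ℝ)^p) (h2 : (45:ℝ)^p ≤ M^r) : X ^ cc ≤ M := by
  have hXpos : (0:ℝ) < X := by linarith
  have hrR : (0:ℝ) < (r:ℝ) := by exact_mod_cast hr
  have hlog : Real.logb 10 X ≤ (p : ℝ)/r := by
    rw [Real.logb_le_iff_le_rpow (by norm_num) hXpos]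
    apply le_of_pow_le_pow_left₀ hr.ne' (by positivity)
    calc X ^ r ≤ (10:ℝ)^p := h1
      _ = ((10:ℝ) ^ ((p:ℝ)/r)) ^ r := by
          rw [← Real.rpow_natCast ((10:ℝ) ^ ((p:ℝ)/r)), ← Real.rpow_mul (by norm_num),
            div_mul_cancel₀ _ hrR.ne', Real.rpow_natCast]
  have h45 : (45:ℝ) ^ Real.logb 10 X ≤ (45:ℝ) ^ ((p:ℝ)/r) :=
    Real.rpow_le_rpow_left_iff (by norm_num : (1:ℝ) < 45) |>.2 hlog
  have hM45 : (45:ℝ) ^ ((p:ℝ)/r) ≤ M := by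
    apply le_of_pow_le_pow_left₀ hr.ne' (le_of_lt hM)
    calc ((45:ℝ) ^ ((p:ℝ)/r)) ^ r = (45:ℝ)^p := by
          rw [← Real.rpow_natCast ((45:ℝ) ^ ((p:ℝ)/r)), ← Real.rpow_mul (by norm_num),
            div_mul_cancel₀ _ hrR.ne', Real.rpow_natCast]
      _ ≤ M ^ r := h2
  calc X ^ cc = (45:ℝ) ^ Real.logb 10 X := (rpow_cc_key X hXpos).symm
    _ ≤ (45:ℝ) ^ ((p:ℝ)/r) := h45
    _ ≤ M := hM45

lemma two_lb : (312/100 : ℝ) ≤ (2:ℝ) ^ cc :=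
  rpow_cc_lb 2 (312/100) 3 10 (by norm_num) (by norm_num) (by norm_num) (by norm_num) (by norm_num)
lemma two_ub : (2:ℝ) ^ cc ≤ 327/100 :=
  rpow_cc_ub 2 (327/100) 31 100 (by norm_num) (by norm_num) (by norm_num) (by norm_num) (by norm_num)
lemma three_lb : (61/10 : ℝ) ≤ (3:ℝ) ^ cc :=
  rpow_cc_lb 3 (61/10) 10 21 (by norm_num) (by norm_num) (by norm_num) (by norm_num) (by norm_num)
lemma seven_lb : (238/10 : ℝ) ≤ (7:ℝ) ^ cc :=
  rpow_cc_lb 7 (238/10) 5 6 (by norm_num) (by norm_num) (by norm_num) (by norm_num) (by norm_num)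

lemma four_eq : (4:ℝ) ^ cc = (2:ℝ)^cc * (2:ℝ)^cc := by
  rw [← Real.mul_rpow (by norm_num) (by norm_num)]; norm_num
lemma six_eq : (6:ℝ) ^ cc = (2:ℝ)^cc * (3:ℝ)^cc := by
  rw [← Real.mul_rpow (by norm_num) (by norm_num)]; norm_num
lemma eight_eq : (8:ℝ) ^ cc = (2:ℝ)^cc * ((2:ℝ)^cc * (2:ℝ)^cc) := by
  rw [← Real.mul_rpow (by norm_num) (by norm_num), ← Real.mul_rpow (by norm_num) (by norm_num)]
  norm_num
lemma nine_eq : (9:ℝ) ^ cc = (3:ℝ)^cc * (3:ℝ)^cc := by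
  rw [← Real.mul_rpow (by norm_num) (by norm_num)]; norm_num
lemma five_eq : (5:ℝ) ^ cc * (2:ℝ)^cc = 45 := by
  rw [← Real.mul_rpow (by norm_num) (by norm_num)]
  norm_num [ten_rpow_cc]
lemma five_lb : (4500/327 : ℝ) ≤ (5:ℝ) ^ cc := by
  have h2 := two_ub
  have h2p : (0:ℝ) < (2:ℝ)^cc := Real.rpow_pos_of_pos (by norm_num) _
  have h5 := five_eq
  nlinarith [Real.rpow_pos_of_pos (by norm_num : (0:ℝ) < 5) cc]

lemma tangent (a u : ℝ) (ha : 0 < a) (hu : 0 ≤ u) :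
    a ^ cc * (1 + cc * ((u - a)/a)) ≤ u ^ cc := by
  have hs : (-1:ℝ) ≤ (u - a)/a := by
    rw [le_div_iff₀ ha]; linarith
  have hb := one_add_mul_self_le_rpow_one_add hs one_le_cc
  have he : (1 + (u - a)/a) = u / a := by field_simp; ring
  rw [he] at hb
  rw [Real.div_rpow hu (le_of_lt ha)] at hb
  have hap : (0:ℝ) < a ^ cc := Real.rpow_pos_of_pos ha _
  calc a ^ cc * (1 + cc * ((u - a)/a)) ≤ a ^ cc * (u ^ cc / a ^ cc) :=
        mul_le_mul_of_nonneg_left hb (le_of_lt hap)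
    _ = u ^ cc := by field_simp

lemma tangent_lo (q t M : ℝ) (hq : 0 < q) (ht0 : 0 ≤ t) (hM : 0 ≤ M) (hMle : M ≤ q ^ cc) :
    45*M + (45*M*(33/20)/q)*t ≤ 45*((q:ℝ)+t)^cc := by
  have h := tangent q (q+t) hq (by linarith)
  have he : (q + t - q)/q = t/q := by ring_nf
  rw [he] at h
  have hX : (0:ℝ) < q ^ cc := Real.rpow_pos_of_pos hq _
  have hcct : (33/20)*t ≤ cc*t := mul_le_mul_of_nonneg_right cc_lb ht0
  have hXcc : M*((33/20)*t) ≤ q^cc*(cc*t) :=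
    mul_le_mul hMle hcct (by positivity) (le_of_lt hX)
  have hdiv : M*((33/20)*t)/q ≤ q^cc*(cc*t)/q := by
    exact (div_le_div_iff_of_pos_right hq).2 hXcc
  have he2 : q ^ cc * (1 + cc * (t / q)) = q^cc + q^cc*(cc*t)/q := by
    field_simp
  rw [he2] at h
  have hg : 45 * M + 45 * M * (33/20) / q * t = 45*(M + M*((33/20)*t)/q) := by ring
  rw [hg]
  nlinarith [hMle, hdiv]

lemma tangent_hi (a t M : ℝ) (ha : (83/50:ℝ) ≤ a) (ht0 : 0 ≤ t) (ht1 : t ≤ 1)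
    (hM : 0 ≤ M) (hMle : M ≤ a ^ cc) :
    45*M + (45*M*(83/50)/a)*(t-1) ≤ 45*((a-1)+t)^cc := by
  have ha0 : (0:ℝ) < a := by linarith
  have h := tangent a (a-1+t) ha0 (by linarith)
  have he : (a - 1 + t - a)/a = (t-1)/a := by ring_nf
  rw [he] at h
  have hX : (0:ℝ) < a ^ cc := Real.rpow_pos_of_pos ha0 _
  have hcct : (83/50)*(t-1) ≤ cc*(t-1) := by
    have := mul_le_mul_of_nonpos_right cc_ub (by linarith : t - 1 ≤ 0)
    linarith
  have hfac : (0:ℝ) ≤ 1 + cc * ((t-1)/a) := by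
    have h1 : cc*(t-1)/a ≥ ((83/50)*(t-1))/a := (div_le_div_iff_of_pos_right ha0).2 hcct
    have h2 : ((83/50)*(t-1))/a ≥ -1 := by
      rw [ge_iff_le, neg_le, ← neg_div, div_le_one ha0]
      nlinarith
    have h3 : cc * ((t-1)/a) = cc*(t-1)/a := by ring
    linarith [h3 ▸ h1]
  have hMfac : M * (1 + cc * ((t-1)/a)) ≤ a^cc * (1 + cc * ((t-1)/a)) :=
    mul_le_mul_of_nonneg_right hMle hfac
  have hMexp : 45*M + (45*M*(83/50)/a)*(t-1) ≤ 45 * (M * (1 + cc * ((t-1)/a))) := by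
    have hd : M*((83/50)*(t-1))/a ≤ M*(cc*(t-1))/a :=
      (div_le_div_iff_of_pos_right ha0).2 (mul_le_mul_of_nonneg_left hcct hM)
    have e1 : 45*M + (45*M*(83/50)/a)*(t-1) = 45*(M + (M*((83/50)*(t-1)))/a) := by ring
    have e2 : 45 * (M * (1 + cc * ((t-1)/a))) = 45*(M + (M*(cc*(t-1)))/a) := by
      field_simp
    rw [e1, e2]
    linarith
  linarith [mul_le_mul_of_nonneg_left (le_trans hMfac h) (by norm_num : (0:ℝ) ≤ 45)]


lemma pow2_pos : (0:ℝ) < (2:ℝ)^cc := Real.rpow_pos_of_pos (by norm_num) _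
lemma pow3_pos : (0:ℝ) < (3:ℝ)^cc := Real.rpow_pos_of_pos (by norm_num) _
lemma four_lb : (97344/10000:ℝ) ≤ (4:ℝ)^cc := by
  rw [four_eq]; nlinarith [two_lb, pow2_pos]
lemma six_lb : (19032/1000:ℝ) ≤ (6:ℝ)^cc := by
  rw [six_eq]; nlinarith [two_lb, three_lb, pow2_pos, pow3_pos]
lemma eight_lb : (30371/1000:ℝ) ≤ (8:ℝ)^cc := by
  have h := pow_le_pow_left₀ (by norm_num : (0:ℝ) ≤ 312/100) two_lb 3
  rw [eight_eq]
  nlinarith [h]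
lemma nine_lb : (3721/100:ℝ) ≤ (9:ℝ)^cc := by
  rw [nine_eq]; nlinarith [three_lb, pow3_pos]
lemma ten_lb : (45:ℝ) ≤ (10:ℝ)^cc := by rw [ten_rpow_cc]

lemma base_ineq (q : ℕ) (hq1 : 1 ≤ q) (hq9 : q ≤ 9) (t : ℝ) (ht0 : 0 ≤ t) (ht1 : t ≤ 1) :
    (45 + 22*(q:ℝ)*((q:ℝ)-1)) + 44*(q:ℝ)*t ≤ 45*((q:ℝ)+t)^cc := by
  interval_cases q <;> push_cast
  · have h := tangent_lo 1 t 1 (by norm_num) ht0 (by norm_num)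
      (by rw [Real.one_rpow])
    linarith
  · have h := tangent_lo 2 t (312/100) (by norm_num) ht0 (by norm_num) two_lb
    linarith
  · have h := tangent_lo 3 t (61/10) (by norm_num) ht0 (by norm_num) three_lb
    linarith
  · have h := tangent_lo 4 t (97344/10000) (by norm_num) ht0 (by norm_num) four_lb
    linarith
  · have h := tangent_lo 5 t (4500/327) (by norm_num) ht0 (by norm_num) five_lb
    linarith
  · have h := tangent_lo 6 t (19032/1000) (by norm_num) ht0 (by norm_num) six_lb
    linarith
  · have h := tangent_hi 8 t (30371/1000) (by norm_num) ht0 ht1 (by norm_num) eight_lb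
    norm_num at h
    linarith
  · have h := tangent_hi 9 t (3721/100) (by norm_num) ht0 ht1 (by norm_num) nine_lb
    norm_num at h
    linarith
  · have h := tangent_hi 10 t 45 (by norm_num) ht0 ht1 (by norm_num) ten_lb
    norm_num at h
    linarith

lemma A_vals : A 1 = 1 ∧ A 2 = 2 ∧ A 3 = 4 ∧ A 4 = 7 ∧ A 5 = 11 ∧ A 6 = 16 ∧ A 7 = 22 ∧ A 8 = 29 ∧ A 9 = 37 := by
  norm_num [A, Finset.sum_range_succ, digProd_zero, digProd_lt10]

lemma digProd_vals : digProd 1 = 1 ∧ digProd 2 = 2 ∧ digProd 3 = 3 ∧ digProd 4 = 4 ∧ digProd 5 = 5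
    ∧ digProd 6 = 6 ∧ digProd 7 = 7 ∧ digProd 8 = 8 ∧ digProd 9 = 9 := by
  refine ⟨?_,?_,?_,?_,?_,?_,?_,?_,?_⟩ <;> rw [digProd_lt10] <;> norm_num

lemma mul10_rpow (x : ℝ) (hx : 0 ≤ x) : ((10*x):ℝ)^cc = 45*x^cc := by
  rw [Real.mul_rpow (by norm_num) hx, ten_rpow_cc]

theorem inv1 : ∀ q : ℕ, 1 ≤ q → ∀ t : ℝ, 0 ≤ t → t ≤ 1 →
    44*((A q : ℕ):ℝ) + 1 + 44*t*((digProd q : ℕ):ℝ) ≤ 45*((q:ℝ)+t)^cc := by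
  intro q
  induction q using Nat.strong_induction_on with
  | _ q IH =>
    intro hq1 t ht0 ht1
    rcases le_or_gt q 9 with hq9 | hq10
    · have hb := base_ineq q hq1 hq9 t ht0 ht1
      obtain ⟨a1,a2,a3,a4,a5,a6,a7,a8,a9⟩ := A_vals
      obtain ⟨d1,d2,d3,d4,d5,d6,d7,d8,d9⟩ := digProd_vals
      interval_cases q <;>
        simp only [a1,a2,a3,a4,a5,a6,a7,a8,a9,d1,d2,d3,d4,d5,d6,d7,d8,d9] <;>
        push_cast at hb ⊢ <;> linarith
    · set u := q / 10 with hu_def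
      set s := q % 10 with hs_def
      have hqe : q = 10 * u + s := by omega
      have hu1 : 1 ≤ u := by omega
      have hs9 : s ≤ 9 := by omega
      have hulq : u < q := by omega
      set T : ℕ := ∑ d ∈ Finset.range s, d with hT_def
      have h2T : 2 * (T:ℝ) = (s:ℝ)^2 - s := by
        interval_cases s <;> norm_num [hT_def, Finset.sum_range_succ]
      have hsR : (0:ℝ) ≤ s := Nat.cast_nonneg s
      have hsR9 : (s:ℝ) ≤ 9 := by exact_mod_cast hs9
      have hT36 : (T:ℝ) ≤ 36 := by nlinarith [h2T, hsR, hsR9]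
      set t' : ℝ := ((T:ℝ) + t*s)/45 with ht'_def
      have ht'0 : 0 ≤ t' := by positivity
      have ht'1 : t' ≤ 1 := by
        rw [ht'_def, div_le_one (by norm_num)]
        nlinarith
      have hIH := IH u hulq hu1 t' ht'0 ht'1
      have hA : ((A q : ℕ):ℝ) = 45*(A u:ℝ) + 1 + (T:ℝ)*(digProd u:ℝ) := by
        rw [hqe, A_tail u s hu1 hs9]
        push_cast
        rw [hT_def]
        push_cast
        ring
      have hP : ((digProd q : ℕ):ℝ) = (s:ℝ)*(digProd u:ℝ) := by
        rw [hqe, digProd_step u s hu1 (by omega)]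
        push_cast
        ring
      have hLHS : 44*((A q : ℕ):ℝ) + 1 + 44*t*((digProd q : ℕ):ℝ)
          = 45*(44*((A u : ℕ):ℝ) + 1 + 44*t'*((digProd u : ℕ):ℝ)) := by
        rw [hA, hP, ht'_def]
        ring
      have hstep1 : 45*(44*((A u : ℕ):ℝ) + 1 + 44*t'*((digProd u : ℕ):ℝ))
          ≤ 45*(45*((u:ℝ)+t')^cc) := by linarith
      have hstep2 : 45*(45*((u:ℝ)+t')^cc) = 45*((10*((u:ℝ)+t'))^cc) := by
        rw [mul10_rpow _ (by positivity)]
      have hmono : (10*((u:ℝ)+t'))^cc ≤ ((q:ℝ)+t)^cc := by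
        apply Real.rpow_le_rpow (by positivity) _ (le_of_lt cc_pos)
        have hqR : (q:ℝ) = 10*(u:ℝ) + s := by rw [hqe]; push_cast; ring
        rw [hqR, ht'_def]
        have key : 2*(T:ℝ) + 2*(t*s) ≤ 9*(s:ℝ) + 9*t := by
          rw [h2T]
          nlinarith [mul_nonneg (sub_nonneg.2 hsR9) (add_nonneg hsR ht0),
            mul_nonneg hsR (sub_nonneg.2 ht1)]
        have : 10*(((T:ℝ) + t*s)/45) ≤ (s:ℝ) + t := by
          rw [div_le_iff₀ (by norm_num : (0:ℝ) < 45)] at *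
          nlinarith [key]
        linarith
      calc 44*((A q : ℕ):ℝ) + 1 + 44*t*((digProd q : ℕ):ℝ)
          = 45*(44*((A u : ℕ):ℝ) + 1 + 44*t'*((digProd u : ℕ):ℝ)) := hLHS
        _ ≤ 45*(45*((u:ℝ)+t')^cc) := hstep1
        _ = 45*((10*((u:ℝ)+t'))^cc) := hstep2
        _ ≤ 45*(((q:ℝ)+t)^cc) := by linarith [mul_le_mul_of_nonneg_left hmono (by norm_num : (0:ℝ) ≤ 45)]

theorem inv2 : ∀ q : ℕ, 1 ≤ q → (¬ ∃ k : ℕ, q = 10^k) →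
    44*((A q : ℕ):ℝ) + 1 < 45*((q:ℝ))^cc := by
  intro q
  induction q using Nat.strong_induction_on with
  | _ q IH =>
    intro hq1 hnot
    rcases le_or_gt q 9 with hq9 | hq10
    · have hq2 : 2 ≤ q := by
        rcases Nat.lt_or_ge q 2 with h | h
        · exfalso; exact hnot ⟨0, by omega⟩
        · exact h
      obtain ⟨a1,a2,a3,a4,a5,a6,a7,a8,a9⟩ := A_vals
      interval_cases q <;> simp only [a1,a2,a3,a4,a5,a6,a7,a8,a9] <;> push_cast
      · nlinarith [two_lb]
      · nlinarith [three_lb]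
      · nlinarith [four_lb]
      · nlinarith [five_lb]
      · nlinarith [six_lb]
      · nlinarith [seven_lb]
      · nlinarith [eight_lb]
      · nlinarith [nine_lb]
    · set u := q / 10 with hu_def
      set s := q % 10 with hs_def
      have hqe : q = 10 * u + s := by omega
      have hu1 : 1 ≤ u := by omega
      have hs9 : s ≤ 9 := by omega
      have hulq : u < q := by omega
      set T : ℕ := ∑ d ∈ Finset.range s, d with hT_def
      have h2T : 2 * (T:ℝ) = (s:ℝ)^2 - s := by
        interval_cases s <;> norm_num [hT_def, Finset.sum_range_succ]
      have hsR : (0:ℝ) ≤ s := Nat.cast_nonneg s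
      have hsR9 : (s:ℝ) ≤ 9 := by exact_mod_cast hs9
      have hA : ((A q : ℕ):ℝ) = 45*(A u:ℝ) + 1 + (T:ℝ)*(digProd u:ℝ) := by
        rw [hqe, A_tail u s hu1 hs9]
        push_cast
        rw [hT_def]
        push_cast
        ring
      have hqR : (q:ℝ) = 10*(u:ℝ) + s := by rw [hqe]; push_cast; ring
      rcases Nat.eq_zero_or_pos s with hs0 | hs1
    -- s = 0
      · have hT0 : (T:ℝ) = 0 := by rw [hT_def, hs0]; norm_num
        have hu2 : ¬ ∃ k : ℕ, u = 10^k := by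
          rintro ⟨k, hk⟩
          exact hnot ⟨k+1, by rw [hqe, hk, hs0]; ring⟩
        have hIH := IH u hulq hu1 hu2
        have : 44*((A q : ℕ):ℝ) + 1 = 45*(44*(A u:ℝ) + 1) := by
          rw [hA, hT0]; ring
        rw [this, hqR, hs0]
        push_cast
        rw [show (10:ℝ)*(u:ℝ) + 0 = 10*(u:ℝ) by ring, mul10_rpow _ (Nat.cast_nonneg u)]
        nlinarith [hIH]
    -- s ≥ 1
      · set t' : ℝ := (T:ℝ)/45 with ht'_def
        have hT36 : (T:ℝ) ≤ 36 := by nlinarith [h2T, hsR, hsR9]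
        have ht'0 : 0 ≤ t' := by positivity
        have ht'1 : t' ≤ 1 := by rw [ht'_def, div_le_one (by norm_num)]; linarith
        have hIH := inv1 u hu1 t' ht'0 ht'1
        have hLHS : 44*((A q : ℕ):ℝ) + 1 = 45*(44*(A u:ℝ) + 1 + 44*t'*(digProd u:ℝ)) := by
          rw [hA, ht'_def]; ring
        have hs1R : (1:ℝ) ≤ s := by exact_mod_cast hs1
        have hmono : (10*((u:ℝ)+t'))^cc < ((q:ℝ))^cc := by
          apply Real.rpow_lt_rpow (by positivity) _ cc_pos
          rw [hqR, ht'_def]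
          have huR : (1:ℝ) ≤ u := by exact_mod_cast hu1
          nlinarith [h2T, hsR, hsR9, hs1R, huR]
        have h10 : 45*(45*((u:ℝ)+t')^cc) = 45*((10*((u:ℝ)+t'))^cc) := by
          rw [mul10_rpow _ (by positivity)]
        calc 44*((A q : ℕ):ℝ) + 1 = 45*(44*(A u:ℝ) + 1 + 44*t'*(digProd u:ℝ)) := hLHS
          _ ≤ 45*(45*((u:ℝ)+t')^cc) := by linarith
          _ = 45*((10*((u:ℝ)+t'))^cc) := h10
          _ < 45*(((q:ℝ))^cc) := by linarith [hmono]

lemma pow10k (k : ℕ) : ((10:ℝ)^k)^cc = 45^k := by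
  induction k with
  | zero => norm_num [Real.one_rpow]
  | succ k ih =>
    rw [pow_succ, mul_comm ((10:ℝ)^k) 10, mul10_rpow _ (by positivity), ih, pow_succ]
    ring

lemma bval (s : ℕ) (h1 : 1 ≤ s) (h4 : s ≤ 4) : b s = s^2 := by
  interval_cases s <;> rw [b_eq_bb] <;> norm_num [bb, Finset.sum_range_succ, digProd_lt10]

theorem key_ineq (n : ℕ) (hn : 1 ≤ n) :
    (44*((b n : ℕ):ℝ) + 25 < 1125*((n:ℝ)/5)^cc ∧ ¬∃ k:ℕ, n = 5*10^k) ∨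
    (44*((b n : ℕ):ℝ) + 25 = 1125*((n:ℝ)/5)^cc ∧ ∃ k:ℕ, n = 5*10^k) := by
  set q := n / 5 with hq_def
  set s := n % 5 with hs_def
  have hne : n = 5*q + s := by omega
  have hs4 : s ≤ 4 := by omega
  have hn5 : ((n:ℝ)/5) = (q:ℝ) + (s:ℝ)/5 := by
    rw [hne]; push_cast; ring
  rcases Nat.eq_zero_or_pos q with hq0 | hq1
  -- q = 0 : n ∈ {1,2,3,4}
  · left
    constructor
    · have hn4 : n ≤ 4 := by omega
      have h10 := mul10_rpow ((n:ℝ)/5) (by positivity)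
      have e1 : (10:ℝ)*((n:ℝ)/5) = 2*(n:ℝ) := by ring
      rw [e1] at h10
      have hbs : ((b n : ℕ):ℝ) = (n:ℝ)^2 := by rw [bval n hn hn4]; push_cast; ring
      rw [hbs]
      interval_cases n <;> norm_num at h10 ⊢ <;>
        linarith [two_lb, four_lb, six_lb, eight_lb, h10]
    · rintro ⟨k, hk⟩
      have : 5 ≤ n := by rw [hk]; have : 1 ≤ 10^k := Nat.one_le_pow _ _ (by norm_num); omega
      omega
  -- q ≥ 1
  · have hb : ((b n : ℕ):ℝ) = 25*(A q:ℝ) + (s:ℝ)^2*(digProd q:ℝ) := by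
      rw [b_eq_bb, hne, bb_formula q s hq1 hs4]
      push_cast
      ring
    rcases Nat.eq_zero_or_pos s with hs0 | hs1
    · rcases Classical.em (∃ k:ℕ, q = 10^k) with ⟨k, hk⟩ | hnp
      -- equality case
      · right
        constructor
        · have hA45 : (44*(A q:ℕ) + 1 : ℕ) = 45^(k+1) := by rw [hk]; exact A_pow10 k
          have hA45R : 44*((A q:ℕ):ℝ) + 1 = 45^(k+1) := by exact_mod_cast hA45
          have hqcc : ((q:ℝ))^cc = 45^k := by
            rw [hk]; push_cast; exact pow10k k
          have hn5' : ((n:ℝ)/5) = (q:ℝ) := by rw [hn5, hs0]; push_cast; ring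
          rw [hn5', hqcc, hb, hs0]
          push_cast
          linear_combination (25:ℝ)*hA45R
        · exact ⟨k, by omega⟩
      -- strict, s = 0, q not a power of 10
      · left
        constructor
        · have h2 := inv2 q hq1 hnp
          have : ((n:ℝ)/5) = (q:ℝ) := by rw [hn5, hs0]; push_cast; ring
          rw [this, hb, hs0]
          push_cast
          nlinarith [h2]
        · rintro ⟨k, hk⟩
          exact hnp ⟨k, by omega⟩
    -- s ≥ 1 : strict
    · left
      constructor
      · have hsR1 : (1:ℝ) ≤ s := by exact_mod_cast hs1
        have hsR4 : (s:ℝ) ≤ 4 := by exact_mod_cast hs4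
        set t : ℝ := (s:ℝ)^2/25 with ht_def
        have ht0 : 0 ≤ t := by positivity
        have ht1 : t ≤ 1 := by rw [ht_def]; nlinarith
        have h1 := inv1 q hq1 t ht0 ht1
        have hlt : ((q:ℝ) + t)^cc < ((q:ℝ) + (s:ℝ)/5)^cc := by
          apply Real.rpow_lt_rpow (by positivity) _ cc_pos
          rw [ht_def]
          nlinarith
        rw [hb, hn5]
        nlinarith [h1, hlt]
      · rintro ⟨k, hk⟩
        omega


/-- `b(n) ≤ (25/44)(45^(log₁₀(n/5)+1) - 1)` for all `n ≥ 1`, with equality iff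
`n = 5·10^k` for some `k`. -/
theorem stmt7 (n : ℕ) (hn : 1 ≤ n) :
    (b n : ℝ) ≤ 25 / 44 * ((45 : ℝ) ^ (Real.logb 10 ((n : ℝ) / 5) + 1) - 1) ∧
    ((b n : ℝ) = 25 / 44 * ((45 : ℝ) ^ (Real.logb 10 ((n : ℝ) / 5) + 1) - 1) ↔
      ∃ k : ℕ, n = 5 * 10 ^ k) := by
  have hnR : (0:ℝ) < (n:ℝ) := by exact_mod_cast hn
  have hrw : (45:ℝ)^(Real.logb 10 ((n:ℝ)/5) + 1) = 45*((n:ℝ)/5)^cc := by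
    rw [Real.rpow_add (by norm_num : (0:ℝ) < 45), Real.rpow_one,
      rpow_cc_key _ (by positivity)]
    ring
  rw [hrw]
  rcases key_ineq n hn with ⟨hlt, hnk⟩ | ⟨heq, hk⟩
  · refine ⟨by linarith, ⟨fun he => ?_, fun hk' => absurd hk' hnk⟩⟩
    exfalso
    have : 44*((b n : ℕ):ℝ) + 25 = 1125*((n:ℝ)/5)^cc := by linarith
    linarith
  · exact ⟨by linarith, ⟨fun _ => hk, fun _ => by linarith⟩⟩
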